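/- arXiv:2511.13528 — 3 statements merged into one kernel-verified Lean document; each statement's English description precedes it below -/
import Mathlib

section
/- Let G be a finite simple graph and let H be any induced subgraph of G with at least 2 vertices. Then min-bal-cutrank(H) ≤ rankwidth(G). -/
open Classical

/-- The cutrank of a pair of vertex sets `X`, `Y` in a graph `G`:
the rank over `𝔽₂` of the `X × Y` biadjacency matrix. -/
noncomputable def cutrank {V : Type*} (G : SimpleGraph V) (X Y : Finset V) : ℕ :=
  Matrix.rank (Matrix.of fun (x : X) (y : Y) => if G.Adj x.1 y.1 then (1 : ZMod 2) else 0)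

/-- `(X, Y)` is a balanced partition of the vertex set `S`:
`X ⊔ Y = S` and both parts have size at most `(2/3)|S|`. -/
def IsBalancedPartitionOf {V : Type*} (S X Y : Finset V) : Prop :=
  X ∪ Y = S ∧ Disjoint X Y ∧ 3 * X.card ≤ 2 * S.card ∧ 3 * Y.card ≤ 2 * S.card

/-- The minimum balanced cutrank of the induced subgraph `G[S]`:
the minimum of `cutrank G X Y` over balanced partitions `(X, Y)` of `S`.
(For `X, Y ⊆ S`, the biadjacency matrix in `G[S]` coincides with that in `G`.) -/
noncomputable def minBalCutrank {V : Type*} (G : SimpleGraph V) (S : Finset V) : ℕ :=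
  sInf {k | ∃ X Y : Finset V, IsBalancedPartitionOf S X Y ∧ cutrank G X Y = k}

/-- A rank-decomposition of a graph on vertex type `V`: a subcubic tree
together with a bijection from `V` to the leaves (degree-1 vertices) of the tree. -/
structure RankDecomp (V : Type*) [Fintype V] where
  n : ℕ
  tree : SimpleGraph (Fin n)
  isTree : tree.IsTree
  subcubic : ∀ t : Fin n, tree.degree t ≤ 3
  leaf : V → Fin n
  leafDeg : ∀ v : V, tree.degree (leaf v) = 1
  leafInj : Function.Injective leaf
  leafSurj : ∀ t : Fin n, tree.degree t = 1 → ∃ v : V, leaf v = t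

/-- The side of the edge `{u, v}` of the decomposition tree containing `u`:
all vertices of `G` whose leaf lies in the component of `u` after deleting the edge. -/
noncomputable def RankDecomp.side {V : Type*} [Fintype V] (d : RankDecomp V) (u v : Fin d.n) :
    Finset V :=
  Finset.univ.filter fun x => (d.tree.deleteEdges {s(u, v)}).Reachable (d.leaf x) u

/-- The decomposition `d` has width at most `k` for the graph `G`: every edge of the
tree induces a partition of the vertices of cutrank at most `k`. -/
def RankDecomp.widthLE {V : Type*} [Fintype V] (G : SimpleGraph V) (d : RankDecomp V) (k : ℕ) :
    Prop :=
  ∀ u v : Fin d.n, d.tree.Adj u v → cutrank G (d.side u v) (d.side v u) ≤ k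

/-- The rankwidth of `G`: the minimum width of a rank-decomposition of `G`. -/
noncomputable def rankwidth {V : Type*} [Fintype V] (G : SimpleGraph V) : ℕ :=
  sInf {k | ∃ d : RankDecomp V, RankDecomp.widthLE G d k}

/-! Fix a rank-decomposition and call a side of a tree edge heavy if it contains more than two
thirds of `S`. If the side behind `u`, seen from its neighbour `v`, is heavy, then `u` is not a leaf
since `|S| ≥ 2`, so that side is split among the at most two other neighbours of `u`. One of them,
`a`, gets more than a third of `S`; unless the edge `ua` has no heavy side, this forces the side
behind `a`, seen from `u`, to be heavy, and it contains fewer tree vertices. Hence some edge has no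
heavy side. Its sides cut `S` into a balanced partition whose biadjacency matrix is a submatrix of
that of the edge. Rank-decompositions exist once `|V| ≥ 2`: take the leaves of a binary heap. -/

open Finset

namespace SimpleGraph

variable {α : Type*} {G : SimpleGraph α} {s t u v a x : α}

lemma Walk.reachable_deleteEdges_of_notMem_support {e : Sym2 α} (p : G.Walk s t)
    (hx : x ∉ p.support) (he : x ∈ e) : (G.deleteEdges {e}).Reachable s t :=
  ⟨p.toDeleteEdges {e} fun _ hp heq => hx (p.mem_support_of_mem_edges hp (heq ▸ he))⟩

lemma Reachable.deleteEdges_or (h : G.Reachable t u) (v : α) :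
    (G.deleteEdges {s(u, v)}).Reachable t u ∨ (G.deleteEdges {s(u, v)}).Reachable t v := by
  obtain ⟨p⟩ := h
  induction p with
  | nil => exact Or.inl .rfl
  | @cons x y u hxy p ih =>
    by_cases he : s(x, y) = s(u, v)
    · rcases Sym2.eq_iff.mp he with ⟨rfl, -⟩ | ⟨rfl, -⟩
      · exact Or.inl .rfl
      · exact Or.inr .rfl
    · have hadj : (G.deleteEdges {s(u, v)}).Adj x y := by simp [hxy, he]
      exact ih.imp hadj.reachable.trans hadj.reachable.trans

lemma IsAcyclic.not_reachable_deleteEdges (hG : G.IsAcyclic) (h : G.Adj u v) :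
    ¬(G.deleteEdges {s(u, v)}).Reachable u v :=
  isAcyclic_iff_forall_adj_isBridge.mp hG h

lemma IsAcyclic.reachable_deleteEdges_of_reachable_neighbor (hG : G.IsAcyclic)
    (hua : G.Adj u a) (hav : a ≠ v) (ht : (G.deleteEdges {s(a, u)}).Reachable t a) :
    (G.deleteEdges {s(u, v)}).Reachable t u := by
  obtain ⟨p⟩ := ht
  have hu : u ∉ p.support := fun hu =>
    hG.not_reachable_deleteEdges hua.symm (p.dropUntil u hu).reachable.symm
  have hau : (G.deleteEdges {s(u, v)}).Adj a u := by
    simp [hua.symm, hav, hua.ne.symm]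
  refine Reachable.trans ?_ hau.reachable
  exact (p.mapLe (deleteEdges_le _)).reachable_deleteEdges_of_notMem_support
    (by rwa [Walk.support_mapLe_eq_support]) (Sym2.mem_mk_left u v)

lemma exists_adj_reachable_deleteEdges (h : (G.deleteEdges {s(u, v)}).Reachable t u)
    (ht : t ≠ u) : ∃ a, G.Adj u a ∧ a ≠ v ∧ (G.deleteEdges {s(a, u)}).Reachable t a := by
  obtain ⟨p, hp⟩ := h.symm.exists_isPath
  cases p with
  | nil => exact absurd rfl ht
  | @cons _ a _ hua q =>
    rw [Walk.cons_isPath_iff] at hp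
    obtain ⟨hua, hne⟩ := deleteEdges_adj.mp hua
    refine ⟨a, hua, fun hav => hne (by simp [hav]), ?_⟩
    exact ((q.mapLe (deleteEdges_le _)).reachable_deleteEdges_of_notMem_support
      (by rw [Walk.support_mapLe_eq_support]; exact hp.2) (Sym2.mem_mk_right a u)).symm

lemma IsAcyclic.card_reachable_deleteEdges_lt [Fintype α] [DecidableEq α]
    [DecidableRel G.Adj] (hG : G.IsAcyclic) (hua : G.Adj u a) (hav : a ≠ v) :
    #{t | (G.deleteEdges {s(a, u)}).Reachable t a} <
      #{t | (G.deleteEdges {s(u, v)}).Reachable t u} := by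
  refine card_lt_card (ssubset_iff_of_subset ?_ |>.mpr ⟨u, ?_, ?_⟩)
  · intro t
    simpa using hG.reachable_deleteEdges_of_reachable_neighbor hua hav
  · simp
  · simpa using fun h => hG.not_reachable_deleteEdges hua.symm h.symm

end SimpleGraph

section ParentGraph

open SimpleGraph

def parentGraph (n : ℕ) (p : ℕ → ℕ) : SimpleGraph (Fin n) :=
  SimpleGraph.fromRel fun a b => a.1 ≠ 0 ∧ b.1 = p a.1

variable {n : ℕ} {p : ℕ → ℕ}

lemma parentGraph_adj (hp : ∀ k, k ≠ 0 → p k < k) {a b : Fin n} :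
    (parentGraph n p).Adj a b ↔ (a.1 ≠ 0 ∧ b.1 = p a.1) ∨ (b.1 ≠ 0 ∧ a.1 = p b.1) := by
  refine (fromRel_adj _ _ _).trans (and_iff_right_of_imp ?_)
  rintro (⟨ha, hb⟩ | ⟨hb, ha⟩) rfl
  · exact (hp _ ha).ne hb.symm
  · exact (hp _ hb).ne ha.symm

lemma parentGraph_reachable_zero (hp : ∀ k, k ≠ 0 → p k < k) (hn : 0 < n) (a : Fin n) :
    (parentGraph n p).Reachable a ⟨0, hn⟩ := by
  obtain ⟨k, hk⟩ := a
  induction k using Nat.strong_induction_on with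
  | _ k ih =>
    rcases Nat.eq_zero_or_pos k with rfl | hk0
    · exact .rfl
    · have hpk := hp k hk0.ne'
      have hadj : (parentGraph n p).Adj ⟨k, hk⟩ ⟨p k, hpk.trans hk⟩ :=
        (parentGraph_adj hp).mpr (.inl ⟨hk0.ne', rfl⟩)
      exact hadj.reachable.trans (ih _ hpk _)

lemma card_edgeSet_parentGraph (hp : ∀ k, k ≠ 0 → p k < k) :
    Nat.card (parentGraph n p).edgeSet = n - 1 := by
  have hlt (i : Fin (n - 1)) : p (i + 1) < n := by have := hp (i + 1) (by omega); omega
  let f (i : Fin (n - 1)) : (parentGraph n p).edgeSet :=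
    ⟨s(⟨i + 1, by omega⟩, ⟨p (i + 1), hlt i⟩), (parentGraph_adj hp).mpr (.inl ⟨by simp, rfl⟩)⟩
  have hf : Function.Bijective f := by
    refine ⟨fun i j hij => ?_, fun ⟨e, he⟩ => ?_⟩
    · have hpi := hp (i + 1) (by omega)
      have hpj := hp (j + 1) (by omega)
      rw [Subtype.ext_iff, Sym2.eq_iff] at hij
      simp only [Fin.ext_iff] at hij
      ext
      omega
    · induction e with | h a b => ?_
      rw [mem_edgeSet, parentGraph_adj hp] at he
      rcases he with ⟨ha, hb⟩ | ⟨hb, ha⟩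
      · refine ⟨⟨a - 1, by omega⟩, ?_⟩
        rw [Subtype.ext_iff, Sym2.eq_iff]
        simp [Fin.ext_iff, Nat.sub_add_cancel (Nat.pos_of_ne_zero ha), hb]
      · refine ⟨⟨b - 1, by omega⟩, ?_⟩
        rw [Subtype.ext_iff, Sym2.eq_iff]
        simp [Fin.ext_iff, Nat.sub_add_cancel (Nat.pos_of_ne_zero hb), ha]
  rw [← Nat.card_eq_of_bijective f hf, Nat.card_eq_fintype_card, Fintype.card_fin]

lemma isTree_parentGraph (hp : ∀ k, k ≠ 0 → p k < k) (hn : 0 < n) :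
    (parentGraph n p).IsTree := by
  refine isTree_iff_connected_and_card.mpr ⟨?_, ?_⟩
  · exact (connected_iff _).mpr ⟨fun a b => (parentGraph_reachable_zero hp hn a).trans
      (parentGraph_reachable_zero hp hn b).symm, ⟨⟨0, hn⟩⟩⟩
  · rw [card_edgeSet_parentGraph hp, Nat.card_eq_fintype_card, Fintype.card_fin]
    omega

lemma degree_parentGraph (hp : ∀ k, k ≠ 0 → p k < k) (t : Fin n) :
    (parentGraph n p).degree t =
      #{k ∈ range n | (t.1 ≠ 0 ∧ k = p t.1) ∨ (k ≠ 0 ∧ t.1 = p k)} := by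
  rw [← card_neighborFinset_eq_degree, ← card_map Fin.valEmbedding]
  congr 1
  ext k
  simp only [mem_map, mem_neighborFinset, parentGraph_adj hp, Fin.valEmbedding_apply, mem_filter,
    mem_range]
  constructor
  · rintro ⟨b, hb, rfl⟩
    exact ⟨b.2, hb⟩
  · rintro ⟨hk, h⟩
    exact ⟨⟨k, hk⟩, h, rfl⟩

end ParentGraph

section Heap

open SimpleGraph

def heapGraph (n : ℕ) : SimpleGraph (Fin n) :=
  parentGraph n fun k => (k - 1) / 2

lemma heap_parent_lt : ∀ k, k ≠ 0 → (k - 1) / 2 < k := by omega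

lemma isTree_heapGraph {n : ℕ} (hn : 0 < n) : (heapGraph n).IsTree :=
  isTree_parentGraph heap_parent_lt hn

lemma degree_heapGraph_le {n : ℕ} (t : Fin n) : (heapGraph n).degree t ≤ 3 := by
  rw [heapGraph, degree_parentGraph heap_parent_lt]
  refine (card_le_card (t := {(t.1 - 1) / 2, 2 * t.1 + 1, 2 * t.1 + 2}) fun k hk => ?_).trans
    card_le_three
  simp only [mem_filter, mem_insert, mem_singleton] at hk ⊢
  omega

lemma degree_heapGraph_eq_one_iff {k : ℕ} (hk : 0 < k) (t : Fin (2 * k + 1)) :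
    (heapGraph (2 * k + 1)).degree t = 1 ↔ k ≤ t.1 := by
  rw [heapGraph, degree_parentGraph heap_parent_lt]
  constructor
  · intro h
    by_contra! ht
    have : 2 ≤ 1 := calc
      2 = #({2 * t.1 + 1, 2 * t.1 + 2} : Finset ℕ) := (card_pair (by omega)).symm
      _ ≤ _ := card_le_card fun j hj => by
        simp only [mem_filter, mem_range, mem_insert, mem_singleton] at hj ⊢
        omega
      _ = 1 := h
    omega
  · intro ht
    refine card_eq_one.mpr ⟨(t.1 - 1) / 2, ?_⟩
    ext j
    simp only [mem_filter, mem_range, mem_singleton]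
    omega

end Heap

section Cutrank

variable {V : Type*} (G : SimpleGraph V)

lemma cutrank_mono {X X' Y Y' : Finset V} (hX : X' ⊆ X) (hY : Y' ⊆ Y) :
    cutrank G X' Y' ≤ cutrank G X Y :=
  Matrix.rank_submatrix_le (.of fun (x : X) (y : Y) => if G.Adj x.1 y.1 then (1 : ZMod 2) else 0)
    (fun x : X' => ⟨x.1, hX x.2⟩) (fun y : Y' => ⟨y.1, hY y.2⟩)

lemma cutrank_le_card (X Y : Finset V) : cutrank G X Y ≤ #X :=
  (Matrix.rank_le_card_height _).trans_eq (Fintype.card_coe X)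

end Cutrank

namespace RankDecomp

open SimpleGraph

variable {V : Type*} [Fintype V] (d : RankDecomp V) {S : Finset V} {u v : Fin d.n} {x : V}

lemma mem_side : x ∈ d.side u v ↔ (d.tree.deleteEdges {s(u, v)}).Reachable (d.leaf x) u := by
  simp [side]

lemma mem_side_swap :
    x ∈ d.side v u ↔ (d.tree.deleteEdges {s(u, v)}).Reachable (d.leaf x) v := by
  rw [mem_side, Sym2.eq_swap]

lemma side_union_side : d.side u v ∪ d.side v u = univ :=
  eq_univ_of_forall fun x => by
    rw [mem_union, mem_side, mem_side_swap]
    exact (d.isTree.connected.preconnected _ _).deleteEdges_or v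

variable {d}

lemma disjoint_side_side (huv : d.tree.Adj u v) : Disjoint (d.side u v) (d.side v u) :=
  disjoint_left.mpr fun _ hu hv => d.isTree.isAcyclic.not_reachable_deleteEdges huv
    ((d.mem_side.mp hu).symm.trans (d.mem_side_swap.mp hv))

lemma card_side_inter_add_card_side_inter (huv : d.tree.Adj u v) (S : Finset V) :
    #(d.side u v ∩ S) + #(d.side v u ∩ S) = #S := by
  rw [← card_union_of_disjoint
      ((disjoint_side_side huv).mono inter_subset_left inter_subset_left),
    ← union_inter_distrib_right, side_union_side, univ_inter]

lemma side_subset_biUnion (hu : d.tree.degree u ≠ 1) :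
    d.side u v ⊆ ((d.tree.neighborFinset u).erase v).biUnion fun a => d.side a u := by
  intro x hx
  have hxu : d.leaf x ≠ u := fun h => hu (h ▸ d.leafDeg x)
  obtain ⟨a, hua, hav, hr⟩ := exists_adj_reachable_deleteEdges (d.mem_side.mp hx) hxu
  exact mem_biUnion.mpr ⟨a, by simp [hua, hav], d.mem_side.mpr hr⟩

lemma card_side_le_one (huv : d.tree.Adj u v) (hu : d.tree.degree u = 1) :
    #(d.side u v) ≤ 1 := by
  refine card_le_one.mpr fun x hx y hy => d.leafInj ?_
  suffices ∀ x ∈ d.side u v, d.leaf x = u by rw [this x hx, this y hy]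
  intro x hx
  by_contra hxu
  obtain ⟨a, hua, hav, -⟩ := exists_adj_reachable_deleteEdges (d.mem_side.mp hx) hxu
  have : 1 < d.tree.degree u :=
    one_lt_card.mpr ⟨a, by simpa using hua, v, by simpa using huv, hav⟩
  omega

lemma exists_heavy_neighbor (hS : 2 ≤ #S)
    (hunbal : ∀ u v, d.tree.Adj u v → 3 * #(d.side u v ∩ S) ≤ 2 * #S →
      2 * #S < 3 * #(d.side v u ∩ S))
    (huv : d.tree.Adj u v) (hheavy : 2 * #S < 3 * #(d.side u v ∩ S)) :
    ∃ a, d.tree.Adj u a ∧ a ≠ v ∧ 2 * #S < 3 * #(d.side a u ∩ S) := by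
  have hu : d.tree.degree u ≠ 1 := fun hu => by
    have := (card_le_card (inter_subset_left (s₂ := S))).trans (card_side_le_one huv hu)
    omega
  set N := (d.tree.neighborFinset u).erase v
  have hN : #N ≤ 2 := by
    have := d.subcubic u
    rw [card_erase_of_mem (by simpa using huv), card_neighborFinset_eq_degree]
    omega
  by_contra! hlight
  have hsmall : ∀ a ∈ N, 3 * #(d.side a u ∩ S) ≤ #S := by
    intro a ha
    obtain ⟨hav, hua⟩ : a ≠ v ∧ d.tree.Adj u a := by simpa [N] using ha
    have := hunbal a u hua.symm (hlight a hua hav)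
    have := card_side_inter_add_card_side_inter hua S
    omega
  have hsum : 3 * ∑ a ∈ N, #(d.side a u ∩ S) ≤ 2 * #S :=
    calc 3 * ∑ a ∈ N, #(d.side a u ∩ S) = ∑ a ∈ N, 3 * #(d.side a u ∩ S) := mul_sum ..
      _ ≤ ∑ _a ∈ N, #S := sum_le_sum hsmall
      _ = #N * #S := by rw [sum_const, smul_eq_mul]
      _ ≤ 2 * #S := Nat.mul_le_mul_right _ hN
  have hcover : #(d.side u v ∩ S) ≤ ∑ a ∈ N, #(d.side a u ∩ S) :=
    calc #(d.side u v ∩ S) ≤ #(N.biUnion fun a => d.side a u ∩ S) := by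
          rw [← biUnion_inter]
          exact card_le_card (inter_subset_inter_right (side_subset_biUnion hu))
      _ ≤ ∑ a ∈ N, #(d.side a u ∩ S) := card_biUnion_le
  omega

theorem exists_isBalancedPartitionOf_side (d : RankDecomp V) (hS : 2 ≤ #S) :
    ∃ u v, d.tree.Adj u v ∧ IsBalancedPartitionOf S (d.side u v ∩ S) (d.side v u ∩ S) := by
  suffices ∃ u v, d.tree.Adj u v ∧ 3 * #(d.side u v ∩ S) ≤ 2 * #S ∧
      3 * #(d.side v u ∩ S) ≤ 2 * #S by
    obtain ⟨u, v, huv, hu, hv⟩ := this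
    refine ⟨u, v, huv, ?_,
      (disjoint_side_side huv).mono inter_subset_left inter_subset_left, hu, hv⟩
    rw [← union_inter_distrib_right, side_union_side, univ_inter]
  by_contra! hunbal
  have hlight : ∀ k u v, #{t | (d.tree.deleteEdges {s(u, v)}).Reachable t u} = k →
      d.tree.Adj u v → 3 * #(d.side u v ∩ S) ≤ 2 * #S := by
    intro k
    induction k using Nat.strong_induction_on with
    | _ k ih =>
      rintro u v rfl huv
      by_contra! hheavy
      obtain ⟨a, hua, hav, ha⟩ := exists_heavy_neighbor hS hunbal huv hheavy
      exact (ih _ (d.isTree.isAcyclic.card_reachable_deleteEdges_lt hua hav) a u rfl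
        hua.symm).not_gt ha
  obtain ⟨x, -⟩ : S.Nonempty := card_pos.mp (by omega)
  obtain ⟨b, hb⟩ := (d.tree.degree_pos_iff_exists_adj _).mp (d.leafDeg x ▸ one_pos)
  exact (hunbal _ _ hb (hlight _ _ _ rfl hb)).not_ge (hlight _ _ _ rfl hb.symm)

theorem nonempty_of_two_le_card (hV : 2 ≤ Fintype.card V) : Nonempty (RankDecomp V) := by
  obtain ⟨k, hk⟩ : ∃ k, Fintype.card V = k + 1 :=
    ⟨_, (Nat.succ_pred_eq_of_pos (by omega)).symm⟩
  have hk0 : 0 < k := by omega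
  let e := Fintype.equivFin V
  refine ⟨{
    n := 2 * k + 1
    tree := heapGraph (2 * k + 1)
    isTree := isTree_heapGraph (by omega)
    subcubic := degree_heapGraph_le
    leaf := fun x => ⟨k + e x, by have := (e x).2; omega⟩
    leafDeg := fun x => (degree_heapGraph_eq_one_iff hk0 _).mpr (by simp)
    leafInj := fun x y h => e.injective (Fin.ext (by simpa using h))
    leafSurj := fun t ht => ?_ }⟩
  have := (degree_heapGraph_eq_one_iff hk0 t).mp ht
  exact ⟨e.symm ⟨t - k, by omega⟩, by ext; simp; omega⟩

lemma widthLE_card (G : SimpleGraph V) (d : RankDecomp V) : d.widthLE G (Fintype.card V) :=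
  fun _ _ _ => (cutrank_le_card G _ _).trans (card_le_univ _)

end RankDecomp

/-- For any induced subgraph `H = G[S]` of `G` with at least 2 vertices,
`min-bal-cutrank(H) ≤ rankwidth(G)`. -/
theorem minBalCutrank_le_rankwidth
    {V : Type*} [Fintype V] (G : SimpleGraph V) (S : Finset V) (hS : 2 ≤ S.card) :
    minBalCutrank G S ≤ rankwidth G := by
  obtain ⟨d₀⟩ := RankDecomp.nonempty_of_two_le_card (hS.trans (card_le_univ S))
  refine le_csInf ⟨_, d₀, d₀.widthLE_card G⟩ ?_
  rintro k ⟨d, hd⟩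
  obtain ⟨u, v, huv, hbal⟩ := d.exists_isBalancedPartitionOf_side hS
  calc minBalCutrank G S ≤ cutrank G (d.side u v ∩ S) (d.side v u ∩ S) :=
        Nat.sInf_le ⟨_, _, hbal, rfl⟩
    _ ≤ cutrank G (d.side u v) (d.side v u) := cutrank_mono G inter_subset_left inter_subset_left
    _ ≤ k := hd u v huv
end

section
/- Let F be a field and let M be a block matrix over F of the form M = [[A, B], [C, D]], where A, B, C, D are conforming blocks (A and B share their row index set, A and C share their column index set, etc.). Then rank(M) + rank(B) ≥ rank(A) + rank(D). -/
open LinearMap Submodule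

lemma finrank_map_add_inf_ker {F W X : Type*} [Field F]
    [AddCommGroup W] [Module F W] [AddCommGroup X] [Module F X]
    [FiniteDimensional F W] (h : W →ₗ[F] X) (S : Submodule F W) :
    Module.finrank F (S.map h) + Module.finrank F ↥(ker h ⊓ S) = Module.finrank F S := by
  have rn := LinearMap.finrank_range_add_finrank_ker (h.domRestrict S)
  rw [range_domRestrict, ker_domRestrict] at rn
  have e : Module.finrank F ↥(Submodule.comap S.subtype (ker h)) = Module.finrank F ↥(ker h ⊓ S) := by
    conv_rhs => rw [inf_comm, ← Submodule.map_comap_subtype]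
    exact LinearEquiv.finrank_eq (Submodule.equivMapOfInjective S.subtype S.injective_subtype _)
  omega

lemma frobenius_rank {F U V W X : Type*} [Field F]
    [AddCommGroup U] [Module F U] [AddCommGroup V] [Module F V]
    [AddCommGroup W] [Module F W] [AddCommGroup X] [Module F X]
    [FiniteDimensional F W]
    (f : U →ₗ[F] V) (g : V →ₗ[F] W) (h : W →ₗ[F] X) :
    Module.finrank F (range (h ∘ₗ g)) + Module.finrank F (range (g ∘ₗ f))
      ≤ Module.finrank F (range g) + Module.finrank F (range ((h ∘ₗ g) ∘ₗ f)) := by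
  have h1 := finrank_map_add_inf_ker h (range g)
  have h2 := finrank_map_add_inf_ker h (range (g ∘ₗ f))
  have h3 : Module.finrank F ↥(ker h ⊓ range (g ∘ₗ f)) ≤ Module.finrank F ↥(ker h ⊓ range g) :=
    Submodule.finrank_mono (inf_le_inf_left _ (LinearMap.range_comp_le_range f g))
  have h4 : Module.finrank F ↥(range (g ∘ₗ f)) ≤ Module.finrank F ↥(range g) :=
    Submodule.finrank_mono (LinearMap.range_comp_le_range f g)
  rw [show (h ∘ₗ g) ∘ₗ f = h ∘ₗ (g ∘ₗ f) from rfl]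
  rw [range_comp g h, range_comp (g ∘ₗ f) h]
  omega

private def elimLeft (F : Type*) [Field F] (n q : Type*) : (n → F) →ₗ[F] (n ⊕ q → F) where
  toFun x := Sum.elim x 0
  map_add' x y := by funext i; cases i <;> simp
  map_smul' c x := by funext i; cases i <;> simp

private def elimRight (F : Type*) [Field F] (n q : Type*) : (q → F) →ₗ[F] (n ⊕ q → F) where
  toFun x := Sum.elim 0 x
  map_add' x y := by funext i; cases i <;> simp
  map_smul' c x := by funext i; cases i <;> simp

/-- For a block matrix `M = [[A, B], [C, D]]` over a field `F`,
`rank(M) + rank(B) ≥ rank(A) + rank(D)`. -/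
theorem rank_fromBlocks_add_rank_ge
    {F : Type*} [Field F] {m n p q : Type*}
    [Fintype m] [Fintype n] [Fintype p] [Fintype q]
    (A : Matrix m n F) (B : Matrix m q F) (C : Matrix p n F) (D : Matrix p q F) :
    A.rank + D.rank ≤ (Matrix.fromBlocks A B C D).rank + B.rank := by
  classical
  set M := Matrix.fromBlocks A B C D with hM
  set T := M.mulVecLin with hT
  set πm : ((m ⊕ p) → F) →ₗ[F] (m → F) := LinearMap.funLeft F F Sum.inl with hπm
  set πp : ((m ⊕ p) → F) →ₗ[F] (p → F) := LinearMap.funLeft F F Sum.inr with hπp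
  set iq := elimRight F n q with hiq
  set iN := elimLeft F n q with hiN
  have hA : A.mulVecLin = (πm ∘ₗ T) ∘ₗ iN := by
    ext x i
    simp [hT, hM, hπm, hiN, elimLeft, Matrix.fromBlocks_mulVec, LinearMap.funLeft]
  have hB : B.mulVecLin = (πm ∘ₗ T) ∘ₗ iq := by
    ext x i
    simp [hT, hM, hπm, hiq, elimRight, Matrix.fromBlocks_mulVec, LinearMap.funLeft]
  have hD : D.mulVecLin = πp ∘ₗ (T ∘ₗ iq) := by
    ext x i
    simp [hT, hM, hπp, hiq, elimRight, Matrix.fromBlocks_mulVec, LinearMap.funLeft]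
  have frob := frobenius_rank iq T πm
  have hrA : A.rank ≤ Module.finrank F (LinearMap.range (πm ∘ₗ T)) := by
    rw [Matrix.rank, hA]
    exact Submodule.finrank_mono (LinearMap.range_comp_le_range iN (πm ∘ₗ T))
  have hrD : D.rank ≤ Module.finrank F (LinearMap.range (T ∘ₗ iq)) := by
    rw [Matrix.rank, hD]
    rw [LinearMap.range_comp]
    exact Submodule.finrank_map_le πp _
  have hMB : (Matrix.fromBlocks A B C D).rank + B.rank
      = Module.finrank F (LinearMap.range T) + Module.finrank F (LinearMap.range ((πm ∘ₗ T) ∘ₗ iq)) := by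
    rw [Matrix.rank, Matrix.rank, hB]
  rw [hMB]
  omega
end

section
/- Let G be a finite simple graph, let (X,Y) be a partition of V(G), and let (A,B) be a partition of V(G). Then cutrank_G(X,Y) ≥ cutrank_G(A ∩ X, A ∩ Y) + cutrank_G(B ∩ X, B ∩ Y) − cutrank_G(A, B). -/
open Classical

/-!
Let `N` be the adjacency matrix over `𝔽₂`, `U₁` the span of its columns indexed by `Y`, `U₂` the
span of those indexed by `B`, and `ρ_S` restriction of vectors to the rows in `S`. Then
`cutrank(S, T) = dim ρ_S(span of the columns in T)`, so
`cutrank(A ∩ X, A ∩ Y) ≤ dim ρ_{A∩X}(U₁ ⊔ U₂)` and `cutrank(B ∩ X, B ∩ Y) ≤ dim ρ_{B∩X}(U₁ ⊓ U₂)`.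
By rank–nullity it remains to compare kernels: `W₁ = U₁ ∩ ker ρ_X` and `W₂ = U₂ ∩ ker ρ_A` satisfy
`W₁ ⊔ W₂ ≤ ker ρ_{A∩X}` and `W₁ ⊓ W₂ ≤ ker ρ_{B∩X}`, and the modular law
`dim (W₁ ⊔ W₂) + dim (W₁ ⊓ W₂) = dim W₁ + dim W₂` (likewise for `U₁, U₂`) closes the count.
-/

open Submodule Module

section

variable {K M : Type*} [Field K] [AddCommGroup M] [Module K M]

theorem finrank_map_add_finrank_inf_ker {P : Type*} [AddCommGroup P] [Module K P]
    (f : M →ₗ[K] P) (U : Submodule K M) [FiniteDimensional K U] :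
    finrank K (U.map f) + finrank K ↥(U ⊓ LinearMap.ker f) = finrank K U := by
  have h := LinearMap.finrank_range_add_finrank_ker (f.domRestrict U)
  rw [LinearMap.range_domRestrict, LinearMap.ker_domRestrict] at h
  rwa [← map_comap_subtype, finrank_map_subtype_eq]

theorem finrank_map_sup_add_finrank_map_inf_le {P Q R S : Type*} [AddCommGroup P] [Module K P]
    [AddCommGroup Q] [Module K Q] [AddCommGroup R] [Module K R] [AddCommGroup S] [Module K S]
    (f : M →ₗ[K] P) (g : M →ₗ[K] Q) (h : M →ₗ[K] R) (k : M →ₗ[K] S)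
    (U₁ U₂ : Submodule K M) [FiniteDimensional K U₁] [FiniteDimensional K U₂]
    (hh : LinearMap.ker f ⊔ LinearMap.ker g ≤ LinearMap.ker h)
    (hk : LinearMap.ker f ⊓ LinearMap.ker g ≤ LinearMap.ker k) :
    finrank K ((U₁ ⊔ U₂).map h) + finrank K ((U₁ ⊓ U₂).map k) ≤
      finrank K (U₁.map f) + finrank K (U₂.map g) := by
  have hsup : finrank K ↥((U₁ ⊓ LinearMap.ker f) ⊔ (U₂ ⊓ LinearMap.ker g)) ≤
      finrank K ↥((U₁ ⊔ U₂) ⊓ LinearMap.ker h) :=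
    finrank_mono (le_inf (sup_le_sup inf_le_left inf_le_left)
      ((sup_le_sup inf_le_right inf_le_right).trans hh))
  have hinf : finrank K ↥((U₁ ⊓ LinearMap.ker f) ⊓ (U₂ ⊓ LinearMap.ker g)) ≤
      finrank K ↥((U₁ ⊓ U₂) ⊓ LinearMap.ker k) :=
    finrank_mono (le_inf (inf_le_inf inf_le_left inf_le_left)
      ((inf_le_inf inf_le_right inf_le_right).trans hk))
  have := finrank_map_add_finrank_inf_ker h (U₁ ⊔ U₂)
  have := finrank_map_add_finrank_inf_ker k (U₁ ⊓ U₂)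
  have := finrank_map_add_finrank_inf_ker f U₁
  have := finrank_map_add_finrank_inf_ker g U₂
  have := finrank_sup_add_finrank_inf_eq (U₁ ⊓ LinearMap.ker f) (U₂ ⊓ LinearMap.ker g)
  have := finrank_sup_add_finrank_inf_eq U₁ U₂
  omega

end

theorem LinearMap.ker_funLeft_val_le {R M V : Type*} [Semiring R] [AddCommMonoid M] [Module R M]
    {S T : Set V} (hST : S ⊆ T) :
    ker (funLeft R M ((↑) : T → V)) ≤ ker (funLeft R M ((↑) : S → V)) :=
  ker_le_ker_comp _ (funLeft R M (Set.inclusion hST))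

theorem Matrix.rank_submatrix_eq_finrank_map_span {K m m' n : Type*} [Field K]
    (N : Matrix m n K) (r : m' → m) (T : Finset n) :
    (N.submatrix r ((↑) : T → n)).rank =
      finrank K ((span K (N.col '' T)).map (LinearMap.funLeft K K r)) := by
  rw [rank_eq_finrank_span_cols, map_span, Set.image_image, Set.image_eq_range]
  rfl

theorem cutrank_ge_sub_cutranks_general
    {V : Type*} (G : SimpleGraph V) (X Y A B : Finset V) :
    cutrank G (A ∩ X) (A ∩ Y) + cutrank G (B ∩ X) (B ∩ Y) ≤
      cutrank G X Y + cutrank G A B := by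
  open Finset in
  let cols (T : Finset V) : Submodule (ZMod 2) (V → ZMod 2) := span _ ((G.adjMatrix _).col '' T)
  let restrict (S : Finset V) := LinearMap.funLeft (ZMod 2) (ZMod 2) ((↑) : S → V)
  have (T : Finset V) : FiniteDimensional (ZMod 2) (cols T) :=
    FiniteDimensional.span_of_finite _ (T.finite_toSet.image _)
  have cutrank_eq (S T : Finset V) : cutrank G S T = finrank (ZMod 2) ((cols T).map (restrict S)) :=
    (G.adjMatrix (ZMod 2)).rank_submatrix_eq_finrank_map_span _ T
  have cols_mono {T T' : Finset V} (h : T ⊆ T') : cols T ≤ cols T' :=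
    span_mono (Set.image_mono (coe_subset.mpr h))
  have restrict_ker_mono {S S' : Finset V} (h : S ⊆ S') :
      LinearMap.ker (restrict S') ≤ LinearMap.ker (restrict S) :=
    LinearMap.ker_funLeft_val_le (coe_subset.mpr h)
  simp only [cutrank_eq]
  calc _ ≤ finrank (ZMod 2) ((cols Y ⊔ cols B).map (restrict (A ∩ X))) +
          finrank (ZMod 2) ((cols Y ⊓ cols B).map (restrict (B ∩ X))) :=
        add_le_add (finrank_mono (map_mono (le_sup_of_le_left (cols_mono inter_subset_right))))
          (finrank_mono (map_mono
            (le_inf (cols_mono inter_subset_right) (cols_mono inter_subset_left))))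
    _ ≤ _ := finrank_map_sup_add_finrank_map_inf_le _ _ _ _ _ _
        (sup_le (restrict_ker_mono inter_subset_right) (restrict_ker_mono inter_subset_left))
        (inf_le_left.trans (restrict_ker_mono inter_subset_right))

/-- For partitions `(X, Y)` and `(A, B)` of `V(G)`,
`cutrank(X, Y) ≥ cutrank(A ∩ X, A ∩ Y) + cutrank(B ∩ X, B ∩ Y) − cutrank(A, B)`
(stated additively to avoid truncated subtraction). -/
theorem cutrank_ge_sub_cutranks
    {V : Type*} [Fintype V] (G : SimpleGraph V) (X Y A B : Finset V)
    (hXY : X ∪ Y = Finset.univ) (hdXY : Disjoint X Y)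
    (hAB : A ∪ B = Finset.univ) (hdAB : Disjoint A B) :
    cutrank G (A ∩ X) (A ∩ Y) + cutrank G (B ∩ X) (B ∩ Y) ≤
      cutrank G X Y + cutrank G A B :=
  cutrank_ge_sub_cutranks_general G X Y A B
end
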